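/- The Fisher–Yates shuffle produces a uniformly distributed permutation: if for each n from N−1 down to 1 we draw k_n uniformly and independently from {0,…,n} and swap positions n and k_n of an array of N distinct elements, then the resulting arrangement is uniform over all N! permutations. -/

import Mathlib

/-- The permutation produced by the Fisher–Yates shuffle from the random
indices `k`, namely the composition of transpositions
`τ_{N-1, k_{N-1}} ∘ ⋯ ∘ τ_{1, k_1}` (the `n = 0` factor is the identity). -/
def fisherYatesPerm (N : ℕ) (k : ∀ i : Fin N, Fin (i.1 + 1)) :
    Equiv.Perm (Fin N) :=
  (((List.finRange N).reverse.map
    (fun i => Equiv.swap i (Fin.castLE i.isLt (k i))))).prod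

/-!
Write `π_N = fisherYatesPerm N` and `ι : Perm (Fin N) → Perm (Fin (N+1))` for the extension
fixing the last point. Then `π_{N+1}(k) = swap (last N) k_N * ι (π_N k')`, where `k'` drops the
last index. Evaluating at `last N` recovers `k_N`, and cancelling the swap recovers `π_N k'`; so by
induction the shuffle is injective. Since there are `1 · 2 ⋯ N = N!` index choices, it is a
bijection onto `Perm (Fin N)`, and the image of a uniform distribution under a bijection is uniform.
-/

open Equiv

theorem PMF.map_uniformOfFintype_of_bijective {α β : Type*} [Fintype α] [Nonempty α]
    [Fintype β] [Nonempty β] {f : α → β} (hf : Function.Bijective f) :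
    (PMF.uniformOfFintype α).map f = PMF.uniformOfFintype β := by
  ext b
  obtain ⟨a, rfl⟩ := hf.surjective b
  rw [PMF.map_apply, tsum_eq_single a fun a' ha' => if_neg fun h => ha' (hf.injective h).symm,
    if_pos rfl, PMF.uniformOfFintype_apply, PMF.uniformOfFintype_apply,
    Fintype.card_of_bijective hf]

namespace Fin

noncomputable def castSuccPerm (N : ℕ) : Perm (Fin N) →* Perm (Fin (N + 1)) :=
  Perm.viaEmbeddingHom Fin.castSuccEmb

theorem castSuccPerm_injective (N : ℕ) : Function.Injective (castSuccPerm N) :=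
  Perm.viaEmbeddingHom_injective Fin.castSuccEmb

theorem castSuccPerm_apply_castSucc {N : ℕ} (σ : Perm (Fin N)) (i : Fin N) :
    castSuccPerm N σ i.castSucc = (σ i).castSucc :=
  Perm.viaEmbedding_apply σ Fin.castSuccEmb i

theorem castSuccPerm_apply_last {N : ℕ} (σ : Perm (Fin N)) :
    castSuccPerm N σ (Fin.last N) = Fin.last N :=
  Perm.viaEmbedding_apply_of_notMem σ Fin.castSuccEmb _ fun ⟨i, hi⟩ =>
    (Fin.castSucc_lt_last i).ne hi

theorem castSuccPerm_swap {N : ℕ} (a b : Fin N) :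
    castSuccPerm N (swap a b) = swap a.castSucc b.castSucc := by
  ext x
  induction x using Fin.lastCases with
  | last =>
    rw [castSuccPerm_apply_last, swap_apply_of_ne_of_ne (Fin.castSucc_lt_last a).ne'
      (Fin.castSucc_lt_last b).ne']
  | cast i =>
    rw [castSuccPerm_apply_castSucc, (Fin.castSucc_injective N).swap_apply]

end Fin

theorem fisherYatesPerm_succ (N : ℕ) (k : ∀ i : Fin (N + 1), Fin (i.1 + 1)) :
    fisherYatesPerm (N + 1) k =
      swap (Fin.last N) (Fin.castLE (Fin.last N).isLt (k (Fin.last N))) *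
        Fin.castSuccPerm N (fisherYatesPerm N fun i => k i.castSucc) := by
  simp only [fisherYatesPerm, List.finRange_succ_last, List.reverse_append, List.reverse_singleton,
    List.singleton_append, List.map_cons, List.prod_cons, map_list_prod, List.map_reverse,
    List.map_map]
  congr 3
  refine List.map_congr_left fun i _ => ?_
  simp only [Function.comp_apply, Fin.castSuccPerm_swap]
  rfl

theorem fisherYatesPerm_injective (N : ℕ) : Function.Injective (fisherYatesPerm N) := by
  induction N with
  | zero => exact fun k k' _ => funext fun i => i.elim0
  | succ N ih =>
    intro k k' h
    rw [fisherYatesPerm_succ, fisherYatesPerm_succ] at h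
    have h_last : k (Fin.last N) = k' (Fin.last N) := by
      have := congrArg (· (Fin.last N)) h
      simp only [Perm.mul_apply, Fin.castSuccPerm_apply_last, swap_apply_left] at this
      exact Fin.castLE_injective _ this
    rw [h_last] at h
    have h_init := ih (Fin.castSuccPerm_injective N (mul_left_cancel h))
    funext i
    induction i using Fin.lastCases with
    | last => exact h_last
    | cast i => exact congrFun h_init i

theorem card_fisherYates_indices (N : ℕ) :
    Fintype.card (∀ i : Fin N, Fin (i.1 + 1)) = N.factorial := by
  simp only [Fintype.card_pi, Fintype.card_fin]
  rw [Fin.prod_univ_eq_prod_range (· + 1), Finset.prod_range_add_one_eq_factorial]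

theorem fisherYatesPerm_bijective (N : ℕ) : Function.Bijective (fisherYatesPerm N) := by
  refine (Fintype.bijective_iff_injective_and_card _).mpr ⟨fisherYatesPerm_injective N, ?_⟩
  rw [card_fisherYates_indices, Fintype.card_perm, Fintype.card_fin]

/-- Fisher–Yates correctness: if the indices `k_n` are drawn independently and
uniformly from `{0,…,n}` (i.e. `k` is uniform on the product set), then the
resulting permutation is uniform over all `N!` permutations. -/
theorem fisherYates_uniform (N : ℕ) :
    (PMF.uniformOfFintype (∀ i : Fin N, Fin (i.1 + 1))).map (fisherYatesPerm N) =
      PMF.uniformOfFintype (Equiv.Perm (Fin N)) :=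
  PMF.map_uniformOfFintype_of_bijective (fisherYatesPerm_bijective N)
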